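/- core(G) is a critical set if and only if there exists a matching from N(core(G)) into core(G). -/

import Mathlib

open Classical Finset

/-- Neighborhood of a set of vertices: all vertices adjacent to some vertex of `X`. -/
noncomputable def nbhd {V : Type*} (G : SimpleGraph V) [Fintype V] (X : Finset V) : Finset V :=
  Finset.univ.filter (fun v => ∃ x ∈ X, G.Adj x v)

/-- The difference `d(X) = |X| - |N(X)|`. -/
noncomputable def gdiff {V : Type*} (G : SimpleGraph V) [Fintype V] (X : Finset V) : ℤ :=
  (X.card : ℤ) - ((nbhd G X).card : ℤ)

/-- `X` is an independent set of `G`. -/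
def IsIndep {V : Type*} (G : SimpleGraph V) (X : Finset V) : Prop :=
  ∀ x ∈ X, ∀ y ∈ X, ¬ G.Adj x y

/-- The critical difference `d_c(G) = max { d(X) : X ⊆ V(G) }`. -/
noncomputable def critDiff {V : Type*} (G : SimpleGraph V) [Fintype V] : ℤ :=
  Finset.univ.powerset.sup' ⟨∅, Finset.empty_mem_powerset _⟩ (gdiff G)

/-- `X` is a critical set of `G`. -/
noncomputable def IsCritical {V : Type*} (G : SimpleGraph V) [Fintype V] (X : Finset V) : Prop :=
  gdiff G X = critDiff G

/-- `ker G` : the intersection of all critical sets of `G`. -/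
noncomputable def kerG {V : Type*} (G : SimpleGraph V) [Fintype V] : Finset V :=
  Finset.univ.filter (fun v => ∀ X : Finset V, IsCritical G X → v ∈ X)

/-- `diadem G` : the union of all critical independent sets of `G`. -/
noncomputable def diademG {V : Type*} (G : SimpleGraph V) [Fintype V] : Finset V :=
  Finset.univ.filter (fun v => ∃ X : Finset V, IsCritical G X ∧ IsIndep G X ∧ v ∈ X)

/-- The independence number `α(G)`. -/
noncomputable def alphaG {V : Type*} (G : SimpleGraph V) [Fintype V] : ℕ :=
  (Finset.univ.powerset.filter (IsIndep G)).sup Finset.card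

/-- `core G` : the intersection of all maximum independent sets of `G`. -/
noncomputable def coreG {V : Type*} (G : SimpleGraph V) [Fintype V] : Finset V :=
  Finset.univ.filter (fun v => ∀ I : Finset V, IsIndep G I → I.card = alphaG G → v ∈ I)

/-- `M` is a matching of `G`, given as a finite set of pairwise disjoint edges of `G`. -/
def IsMatchingF {V : Type*} (G : SimpleGraph V) (M : Finset (Sym2 V)) : Prop :=
  (↑M : Set (Sym2 V)) ⊆ G.edgeSet ∧
    ∀ e₁ ∈ M, ∀ e₂ ∈ M, e₁ ≠ e₂ → ∀ v : V, v ∈ e₁ → v ∉ e₂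

/-- The matching number `μ(G)`. -/
noncomputable def matchNum {V : Type*} (G : SimpleGraph V) [Fintype V] : ℕ :=
  ((Finset.univ : Finset (Finset (Sym2 V))).filter (IsMatchingF G)).sup Finset.card

/-- There is a matching from `A` into `B`: an injection of `A` into `B` along edges of `G`. -/
def MatchingFromInto {V : Type*} (G : SimpleGraph V) (A B : Finset V) : Prop :=
  ∃ f : V → V, Set.InjOn f ↑A ∧ ∀ a ∈ A, f a ∈ B ∧ G.Adj a (f a)

/-- The auxiliary bipartite graph `H_X` on vertex set `X ∪ N(X) ∪ {v, w}`, where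
`v = Sum.inr false` and `w = Sum.inr true`.  Its edges are the edges of `G` between
`X` and `N(X)`, the edge `vw`, and all edges from `v` to `N(X)`. -/
noncomputable def HX {V : Type*} (G : SimpleGraph V) [Fintype V] (X : Finset V) :
    SimpleGraph ({a : V // a ∈ X ∪ nbhd G X} ⊕ Bool) :=
  SimpleGraph.fromRel (fun p q =>
    match p, q with
    | Sum.inl a, Sum.inl b => a.1 ∈ X ∧ b.1 ∈ nbhd G X ∧ G.Adj a.1 b.1
    | Sum.inr false, Sum.inr true => True
    | Sum.inr false, Sum.inl b => b.1 ∈ nbhd G X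
    | _, _ => False)

/-- The copy of `X` inside the vertex set of `H_X`. -/
noncomputable def Xlift {V : Type*} (G : SimpleGraph V) [Fintype V] (X : Finset V) :
    Finset ({a : V // a ∈ X ∪ nbhd G X} ⊕ Bool) :=
  Finset.univ.filter (fun p => ∃ a : {a : V // a ∈ X ∪ nbhd G X}, p = Sum.inl a ∧ a.1 ∈ X)

/-- Edmonds–Gallai set `D`: vertices missed by some maximum matching. -/
noncomputable def gallaiD {V : Type*} (G : SimpleGraph V) [Fintype V] : Finset V :=
  Finset.univ.filter (fun v => ∃ M : Finset (Sym2 V),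
    IsMatchingF G M ∧ M.card = matchNum G ∧ ∀ e ∈ M, v ∉ e)

/-- Edmonds–Gallai set `A = N(D) - D`. -/
noncomputable def gallaiA {V : Type*} (G : SimpleGraph V) [Fintype V] : Finset V :=
  nbhd G (gallaiD G) \ gallaiD G

/-- Edmonds–Gallai set `C = V - A - D`. -/
noncomputable def gallaiC {V : Type*} (G : SimpleGraph V) [Fintype V] : Finset V :=
  (Finset.univ \ gallaiD G) \ gallaiA G

/-- The vertices of the singleton components of `G[D]`. -/
noncomputable def singlesD {V : Type*} (G : SimpleGraph V) [Fintype V] : Finset V :=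
  (gallaiD G).filter (fun v => ∀ w ∈ gallaiD G, ¬ G.Adj v w)

/-!
The intersection `ker G` of all critical sets is itself critical, because `d` is supermodular
(`N(X ∪ Y) = N(X) ∪ N(Y)` while `N(X ∩ Y) ⊆ N(X) ∩ N(Y)`); it is independent, and an exchange
argument puts it inside every maximum independent set, so `ker G ⊆ core G`.

If a set `X` is critical, Hall's condition for matching `N(X)` into `X` holds: a set `S ⊆ N(X)`
with fewer than `|S|` neighbours in `X` could be removed together with those neighbours to
increase `d`. Conversely, a matching from `N(core G)` into `core G` sends `N(core G) \ N(ker G)`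
injectively into `core G \ ker G`, so `d(core G) ≥ d(ker G) = d_c(G)`.
-/

section

variable {V : Type*} (G : SimpleGraph V) [Fintype V]

@[simp]
lemma mem_nbhd {X : Finset V} {v : V} : v ∈ nbhd G X ↔ ∃ x ∈ X, G.Adj x v := by
  simp [nbhd]

lemma nbhd_mono {X Y : Finset V} (h : X ⊆ Y) : nbhd G X ⊆ nbhd G Y := fun v hv => by
  obtain ⟨x, hx, hxv⟩ := (mem_nbhd G).1 hv
  exact (mem_nbhd G).2 ⟨x, h hx, hxv⟩

lemma nbhd_union (X Y : Finset V) : nbhd G (X ∪ Y) = nbhd G X ∪ nbhd G Y := by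
  ext v
  simp only [mem_nbhd, mem_union, or_and_right, exists_or]

lemma gdiff_le_critDiff (X : Finset V) : gdiff G X ≤ critDiff G :=
  le_sup' _ (mem_powerset.2 (subset_univ X))

lemma isCritical_iff {X : Finset V} : IsCritical G X ↔ critDiff G ≤ gdiff G X :=
  ⟨ge_of_eq, fun h => le_antisymm (gdiff_le_critDiff G X) h⟩

lemma exists_isCritical : ∃ X : Finset V, IsCritical G X := by
  obtain ⟨X, -, hX⟩ := exists_mem_eq_sup' ⟨∅, empty_mem_powerset _⟩ (gdiff G)
  exact ⟨X, hX.symm⟩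

lemma gdiff_add_gdiff_le (X Y : Finset V) :
    gdiff G X + gdiff G Y ≤ gdiff G (X ∪ Y) + gdiff G (X ∩ Y) := by
  have hN : nbhd G (X ∩ Y) ⊆ nbhd G X ∩ nbhd G Y :=
    subset_inter (nbhd_mono G inter_subset_left) (nbhd_mono G inter_subset_right)
  have h₁ := card_union_add_card_inter X Y
  have h₂ := card_union_add_card_inter (nbhd G X) (nbhd G Y)
  have h₃ := card_le_card hN
  rw [← nbhd_union] at h₂
  unfold gdiff
  omega

variable {G}

lemma IsCritical.inter {X Y : Finset V} (hX : IsCritical G X) (hY : IsCritical G Y) :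
    IsCritical G (X ∩ Y) := by
  have := gdiff_add_gdiff_le G X Y
  have := gdiff_le_critDiff G (X ∪ Y)
  rw [isCritical_iff]
  unfold IsCritical at hX hY
  omega

lemma IsCritical.sdiff_nbhd {X : Finset V} (hX : IsCritical G X) :
    IsCritical G (X \ nbhd G X) := by
  have hdisj : Disjoint (nbhd G (X \ nbhd G X)) (X ∩ nbhd G X) := by
    refine disjoint_left.2 fun a ha haX => ?_
    obtain ⟨i, hi, hia⟩ := (mem_nbhd G).1 ha
    exact (mem_sdiff.1 hi).2 ((mem_nbhd G).2 ⟨a, (mem_inter.1 haX).1, hia.symm⟩)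
  have hsub : nbhd G (X \ nbhd G X) ∪ (X ∩ nbhd G X) ⊆ nbhd G X :=
    union_subset (nbhd_mono G sdiff_subset) inter_subset_right
  have h₁ := card_le_card hsub
  rw [card_union_of_disjoint hdisj] at h₁
  have h₂ := card_inter_add_card_sdiff X (nbhd G X)
  rw [isCritical_iff, ← hX]
  unfold gdiff
  omega

lemma IsCritical.kerG_subset {X : Finset V} (hX : IsCritical G X) : kerG G ⊆ X :=
  fun _ hv => (mem_filter.1 hv).2 X hX

variable (G)

/-- A critical set of least cardinality lies in every critical set, since its intersection with
any critical set is again critical. -/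
lemma exists_isCritical_subset_isCritical :
    ∃ K : Finset V, IsCritical G K ∧ ∀ X, IsCritical G X → K ⊆ X := by
  obtain ⟨X₀, hX₀⟩ := exists_isCritical G
  obtain ⟨K, hK, hmin⟩ := (univ.filter (IsCritical G)).exists_min_image card
    ⟨X₀, mem_filter.2 ⟨mem_univ _, hX₀⟩⟩
  have hKcrit : IsCritical G K := (mem_filter.1 hK).2
  refine ⟨K, hKcrit, fun X hX => ?_⟩
  have hle := hmin _ (mem_filter.2 ⟨mem_univ _, hKcrit.inter hX⟩)
  rw [← eq_of_subset_of_card_le inter_subset_left hle]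
  exact inter_subset_right

lemma isCritical_kerG : IsCritical G (kerG G) := by
  obtain ⟨K, hK, hmin⟩ := exists_isCritical_subset_isCritical G
  have hker : kerG G = K :=
    hK.kerG_subset.antisymm fun v hv => mem_filter.2 ⟨mem_univ v, fun X hX => hmin X hX hv⟩
  rwa [hker]

lemma isIndep_kerG : IsIndep G (kerG G) := fun x hx _ hy hxy =>
  (mem_sdiff.1 ((isCritical_kerG G).sdiff_nbhd.kerG_subset hy)).2 ((mem_nbhd G).2 ⟨x, hx, hxy⟩)

lemma card_le_alphaG {I : Finset V} (hI : IsIndep G I) : I.card ≤ alphaG G :=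
  le_sup (mem_filter.2 ⟨mem_powerset.2 (subset_univ I), hI⟩)

variable {G}

lemma IsIndep.exists_isIndep_card_add_gdiff_le {K I : Finset V} (hK : IsIndep G K)
    (hI : IsIndep G I) :
    ∃ J : Finset V, IsIndep G J ∧ (I.card : ℤ) + gdiff G K ≤ J.card + gdiff G (K ∩ I) := by
  refine ⟨(I \ nbhd G (K \ I)) ∪ (K \ I), ?_, ?_⟩
  · intro x hx y hy hxy
    simp only [mem_union, mem_sdiff] at hx hy
    rcases hx with ⟨hxI, hxN⟩ | ⟨hxK, hxI⟩ <;> rcases hy with ⟨hyI, hyN⟩ | ⟨hyK, hyI⟩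
    · exact hI x hxI y hyI hxy
    · exact hxN ((mem_nbhd G).2 ⟨y, mem_sdiff.2 ⟨hyK, hyI⟩, hxy.symm⟩)
    · exact hyN ((mem_nbhd G).2 ⟨x, mem_sdiff.2 ⟨hxK, hxI⟩, hxy⟩)
    · exact hK x hxK y hyK hxy
  · have hNZ := nbhd_mono G (inter_subset_left : K ∩ I ⊆ K)
    have hsub : I ∩ nbhd G (K \ I) ⊆ nbhd G K \ nbhd G (K ∩ I) := by
      intro v hv
      obtain ⟨hvI, hvN⟩ := mem_inter.1 hv
      obtain ⟨w, hw, hwv⟩ := (mem_nbhd G).1 hvN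
      refine mem_sdiff.2 ⟨(mem_nbhd G).2 ⟨w, (mem_sdiff.1 hw).1, hwv⟩, fun hvZ => ?_⟩
      obtain ⟨z, hz, hzv⟩ := (mem_nbhd G).1 hvZ
      exact hI z (mem_inter.1 hz).2 v hvI hzv
    have hdisj : Disjoint (I \ nbhd G (K \ I)) (K \ I) :=
      disjoint_left.2 fun a ha ha' => (mem_sdiff.1 ha').2 (mem_sdiff.1 ha).1
    have h₁ := card_le_card hsub
    rw [card_sdiff_of_subset hNZ] at h₁
    have h₂ := card_union_of_disjoint hdisj
    have h₃ := card_inter_add_card_sdiff I (nbhd G (K \ I))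
    have h₄ := card_inter_add_card_sdiff K I
    have h₅ := card_le_card hNZ
    unfold gdiff
    omega

lemma kerG_subset_of_isIndep {I : Finset V} (hI : IsIndep G I) (hα : I.card = alphaG G) :
    kerG G ⊆ I := by
  obtain ⟨J, hJ, hcard⟩ := (isIndep_kerG G).exists_isIndep_card_add_gdiff_le hI
  have hJα := card_le_alphaG G hJ
  have hker := isCritical_kerG G
  have hcrit : IsCritical G (kerG G ∩ I) := by
    rw [isCritical_iff]
    unfold IsCritical at hker
    omega
  exact hcrit.kerG_subset.trans inter_subset_right

variable (G)

lemma kerG_subset_coreG : kerG G ⊆ coreG G := fun _ hv =>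
  mem_filter.2 ⟨mem_univ _, fun _ hI hα => kerG_subset_of_isIndep hI hα hv⟩

variable {G}

lemma matchingFromInto_of_forall_card_le {A B : Finset V}
    (h : ∀ S ⊆ A, S.card ≤ (B ∩ nbhd G S).card) : MatchingFromInto G A B := by
  let t : A → Finset V := fun a => B.filter (G.Adj a)
  have hall : ∀ s : Finset A, s.card ≤ (s.biUnion t).card := by
    intro s
    have hsA : s.map (Function.Embedding.subtype _) ⊆ A := by
      intro v hv
      obtain ⟨a, -, rfl⟩ := mem_map.1 hv
      exact a.2
    calc s.card = (s.map (Function.Embedding.subtype _)).card := (card_map _).symm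
      _ ≤ (B ∩ nbhd G (s.map (Function.Embedding.subtype _))).card := h _ hsA
      _ ≤ (s.biUnion t).card := card_le_card fun v hv => by
        obtain ⟨hvB, hvN⟩ := mem_inter.1 hv
        obtain ⟨x, hx, hxv⟩ := (mem_nbhd G).1 hvN
        obtain ⟨a, ha, rfl⟩ := mem_map.1 hx
        exact mem_biUnion.2 ⟨a, ha, mem_filter.2 ⟨hvB, hxv⟩⟩
  obtain ⟨f, hf, hft⟩ := (all_card_le_biUnion_card_iff_exists_injective t).1 hall
  refine ⟨fun v => if hv : v ∈ A then f ⟨v, hv⟩ else v, fun a ha b hb hab => ?_, fun a ha => ?_⟩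
  · simp only [mem_coe] at ha hb
    simp only [dif_pos ha, dif_pos hb] at hab
    exact congrArg Subtype.val (hf hab)
  · simpa [ha, t] using hft ⟨a, ha⟩

lemma IsCritical.card_le_card_inter_nbhd {X S : Finset V} (hX : IsCritical G X)
    (hS : S ⊆ nbhd G X) : S.card ≤ (X ∩ nbhd G S).card := by
  have hY : nbhd G (X \ nbhd G S) ⊆ nbhd G X \ S := by
    intro v hv
    obtain ⟨y, hy, hyv⟩ := (mem_nbhd G).1 hv
    obtain ⟨hyX, hyS⟩ := mem_sdiff.1 hy
    exact mem_sdiff.2 ⟨(mem_nbhd G).2 ⟨y, hyX, hyv⟩,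
      fun hvS => hyS ((mem_nbhd G).2 ⟨v, hvS, hyv.symm⟩)⟩
  have h₁ := card_le_card hY
  rw [card_sdiff_of_subset hS] at h₁
  have h₂ := card_inter_add_card_sdiff X (nbhd G S)
  have h₃ := card_le_card hS
  have h₄ := gdiff_le_critDiff G (X \ nbhd G S)
  rw [← hX] at h₄
  unfold gdiff at h₄
  omega

lemma IsCritical.matchingFromInto_nbhd {X : Finset V} (hX : IsCritical G X) :
    MatchingFromInto G (nbhd G X) X :=
  matchingFromInto_of_forall_card_le fun _ hS => hX.card_le_card_inter_nbhd hS

lemma IsCritical.of_subset_of_matchingFromInto {K X : Finset V} (hK : IsCritical G K)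
    (hKX : K ⊆ X) (hM : MatchingFromInto G (nbhd G X) X) : IsCritical G X := by
  obtain ⟨f, hinj, hf⟩ := hM
  have hNK := nbhd_mono G hKX
  have hcard : (nbhd G X \ nbhd G K).card ≤ (X \ K).card := by
    refine card_le_card_of_injOn f (fun a ha => ?_) (hinj.mono (coe_subset.2 sdiff_subset))
    obtain ⟨haX, haK⟩ := mem_sdiff.1 (mem_coe.1 ha)
    exact mem_sdiff.2 ⟨(hf a haX).1, fun hfK => haK ((mem_nbhd G).2 ⟨f a, hfK, (hf a haX).2.symm⟩)⟩
  rw [card_sdiff_of_subset hNK, card_sdiff_of_subset hKX] at hcard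
  have h₁ := card_le_card hKX
  have h₂ := card_le_card hNK
  rw [isCritical_iff, ← hK]
  unfold gdiff
  omega

end

theorem stmt9_general {V : Type*} (G : SimpleGraph V) [Fintype V] :
    IsCritical G (coreG G) ↔ MatchingFromInto G (nbhd G (coreG G)) (coreG G) :=
  ⟨IsCritical.matchingFromInto_nbhd,
    (isCritical_kerG G).of_subset_of_matchingFromInto (kerG_subset_coreG G)⟩

/-- `core G` is critical iff there is a matching from `N(core G)` into `core G`. -/
theorem stmt9 {V : Type*} (G : SimpleGraph V) [Fintype V] [DecidableEq V] [DecidableRel G.Adj] :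
    IsCritical G (coreG G) ↔ MatchingFromInto G (nbhd G (coreG G)) (coreG G) :=
  stmt9_general G
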